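/- Let ε ∈ (1/2, 1], λ ≥ 1/(2ε), n ≥ 2, and consider the continuous-time Markov chain Q on ℤ_+^n where arrivals occur at rate nλ, each arrival samples an unordered pair {i,j} uniformly and joins server i with probability p(Q_i,Q_j) = (1−ε)1{Q_i<Q_j} + ε·1{Q_i>Q_j} + 1{Q_i=Q_j, i<j}, and each nonempty server completes service at rate 1. Then for the Lyapunov function V₂(Q) = max_i Q_i (evaluated at the smallest maximizing index), the drift satisfies D V₂(Q) ≥ 2ελ − 1 ≥ 0 for all states Q, and D V₂(Q) ≤ nλ. -/

import Mathlib

open Finset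

/-- Join probability under the Po2-ε scheme. -/
noncomputable def pEps (ε : ℝ) {n : ℕ} (qi qj : ℕ) (i j : Fin n) : ℝ :=
  (1 - ε) * (if qi < qj then 1 else 0) + ε * (if qj < qi then 1 else 0)
  + (if qi = qj ∧ i < j then 1 else 0)

/-- Arrival rate to server i. -/
noncomputable def rPlusEps (lam ε : ℝ) {n : ℕ} (Q : Fin n → ℕ) (i : Fin n) : ℝ :=
  (2 * lam / ((n : ℝ) - 1)) * ∑ j ∈ Finset.univ.erase i, pEps ε (Q i) (Q j) i j

/-- Lyapunov function `V₂(Q) = max_i Q_i`. -/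
noncomputable def Vmax {n : ℕ} (Q : Fin n → ℕ) : ℝ := ((Finset.univ.sup Q : ℕ) : ℝ)

/-- Generator drift of `Vmax`. -/
noncomputable def driftVmax (lam ε : ℝ) {n : ℕ} (Q : Fin n → ℕ) : ℝ :=
  ∑ i, (rPlusEps lam ε Q i * (Vmax (Function.update Q i (Q i + 1)) - Vmax Q)
    + (if 0 < Q i then (1 : ℝ) else 0) * (Vmax (Function.update Q i (Q i - 1)) - Vmax Q))

/-!
Only an arrival at a longest queue raises `max_i Q_i`, and only a departure from a unique
longest queue lowers it, so the departure part of the drift lies in `[-1, 0]`.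
The first longest queue `i*` wins each of its `n - 1` pairwise comparisons with probability
at least `ε` (exactly `ε` against a shorter queue, `1` against a tied later one), so its
arrival rate alone is at least `(2λ/(n-1))·(n-1)ε = 2ελ`. Conversely
`p(a,b,i,j) + p(b,a,j,i) = 1`, so the arrival rates of all servers sum to
`(2λ/(n-1))·n(n-1)/2 = nλ`.
-/

open Function

section SupUpdate

variable {ι : Type*} [Fintype ι] [DecidableEq ι]

lemma univ_sup_update {α : Type*} [SemilatticeSup α] [OrderBot α] (f : ι → α) (i : ι) (v : α) :
    univ.sup (update f i v) = v ⊔ (univ.erase i).sup f := by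
  rw [← insert_erase (mem_univ i), sup_insert, update_self, erase_insert (notMem_erase i _)]
  exact congrArg (v ⊔ ·) (sup_congr rfl fun j hj => update_of_ne (ne_of_mem_erase hj) _ _)

lemma univ_sup_eq_sup_sup_erase {α : Type*} [SemilatticeSup α] [OrderBot α] (f : ι → α) (i : ι) :
    univ.sup f = f i ⊔ (univ.erase i).sup f := by
  simpa using univ_sup_update f i (f i)

variable (f : ι → ℕ) (i : ι)

lemma univ_sup_update_succ_of_eq (h : f i = univ.sup f) :
    univ.sup (update f i (f i + 1)) = univ.sup f + 1 := by
  have := univ_sup_eq_sup_sup_erase f i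
  rw [univ_sup_update]
  omega

lemma univ_sup_update_succ_of_ne (h : f i ≠ univ.sup f) :
    univ.sup (update f i (f i + 1)) = univ.sup f := by
  have := univ_sup_eq_sup_sup_erase f i
  rw [univ_sup_update]
  omega

lemma univ_sup_update_pred_of_ne {k : ι} (hk : f k = univ.sup f) (hki : k ≠ i) :
    univ.sup (update f i (f i - 1)) = univ.sup f := by
  have := univ_sup_eq_sup_sup_erase f i
  have : f k ≤ (univ.erase i).sup f := le_sup (mem_erase.2 ⟨hki, mem_univ k⟩)
  rw [univ_sup_update]
  omega

lemma univ_sup_update_pred_le : univ.sup (update f i (f i - 1)) ≤ univ.sup f := by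
  have := univ_sup_eq_sup_sup_erase f i
  rw [univ_sup_update]
  omega

lemma univ_sup_sub_one_le_univ_sup_update_pred :
    univ.sup f - 1 ≤ univ.sup (update f i (f i - 1)) := by
  have := univ_sup_eq_sup_sup_erase f i
  rw [univ_sup_update]
  omega

end SupUpdate

lemma exists_least_argmax {ι α : Type*} [Fintype ι] [Nonempty ι] [LinearOrder ι] [LinearOrder α]
    (f : ι → α) : ∃ i, (∀ j, f j ≤ f i) ∧ ∀ j, f j = f i → i ≤ j := by
  classical
  obtain ⟨x, hx⟩ := Finite.exists_max f
  obtain ⟨i, hi, hmin⟩ := (univ.filter (f · = f x)).exists_min_image id ⟨x, by simp⟩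
  rw [mem_filter] at hi
  exact ⟨i, fun j => hi.2 ▸ hx j, fun j hj => hmin j (by simp [hj, hi.2])⟩

lemma sum_sum_erase_of_add_swap_eq_one {ι : Type*} [Fintype ι] [DecidableEq ι] (f : ι → ι → ℝ)
    (hf : ∀ i j, i ≠ j → f i j + f j i = 1) :
    ∑ i, ∑ j ∈ univ.erase i, f i j = Fintype.card ι * (Fintype.card ι - 1) / 2 := by
  have hswap : ∑ i, ∑ j ∈ univ.erase i, f i j = ∑ i, ∑ j ∈ univ.erase i, f j i :=
    sum_comm' fun i j => by simp [and_comm, eq_comm]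
  have hpair : ∀ i, ∑ j ∈ univ.erase i, (f i j + f j i) = (Fintype.card ι - 1 : ℝ) := fun i => by
    rw [sum_congr rfl fun j hj => hf i j (ne_of_mem_erase hj).symm, sum_const,
      card_erase_of_mem (mem_univ i), card_univ, nsmul_one,
      Nat.cast_pred (Fintype.card_pos_iff.2 ⟨i⟩)]
  have htotal : ∑ i, ∑ j ∈ univ.erase i, (f i j + f j i) = ∑ _i : ι, (Fintype.card ι - 1 : ℝ) :=
    sum_congr rfl fun i _ => hpair i
  simp only [sum_add_distrib, sum_const, card_univ, nsmul_eq_mul] at htotal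
  linarith

section Rates

variable {ε : ℝ} {n : ℕ}

lemma pEps_nonneg (hε0 : 0 ≤ ε) (hε1 : ε ≤ 1) (qi qj : ℕ) (i j : Fin n) :
    0 ≤ pEps ε qi qj i j := by
  unfold pEps
  split_ifs <;> linarith

lemma pEps_add_pEps_swap (qi qj : ℕ) {i j : Fin n} (hij : i ≠ j) :
    pEps ε qi qj i j + pEps ε qj qi j i = 1 := by
  unfold pEps
  rcases lt_trichotomy qi qj with h | rfl | h
  · simp [h, h.ne, h.ne', not_lt_of_gt h]
  · rcases lt_or_gt_of_ne hij with h | h <;> simp [h, not_lt_of_gt h]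
  · simp [h, h.ne, h.ne', not_lt_of_gt h]

lemma le_pEps (hε1 : ε ≤ 1) {qi qj : ℕ} {i j : Fin n} (hq : qj ≤ qi) (hij : qi = qj → i < j) :
    ε ≤ pEps ε qi qj i j := by
  unfold pEps
  rcases hq.lt_or_eq with h | rfl
  · simp [h, not_lt_of_gt h, h.ne']
  · simp [hij rfl, hε1]

variable {lam : ℝ}

lemma rPlusEps_nonneg (hlam : 0 ≤ lam) (hε0 : 0 ≤ ε) (hε1 : ε ≤ 1) (Q : Fin n → ℕ) (i : Fin n) :
    0 ≤ rPlusEps lam ε Q i := by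
  have hn : (1 : ℝ) ≤ n := by exact_mod_cast i.pos
  exact mul_nonneg (div_nonneg (by positivity) (by linarith))
    (sum_nonneg fun j _ => pEps_nonneg hε0 hε1 _ _ _ _)

lemma sum_rPlusEps (hn : n ≠ 1) (Q : Fin n → ℕ) : ∑ i, rPlusEps lam ε Q i = n * lam := by
  have hn' : (n : ℝ) - 1 ≠ 0 := sub_ne_zero.2 (by exact_mod_cast hn)
  simp only [rPlusEps, ← mul_sum]
  rw [sum_sum_erase_of_add_swap_eq_one _ fun i j hij => pEps_add_pEps_swap _ _ hij,
    Fintype.card_fin]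
  field_simp

lemma two_mul_mul_le_rPlusEps (hn : n ≠ 1) (hlam : 0 ≤ lam) (hε1 : ε ≤ 1) {Q : Fin n → ℕ}
    {i : Fin n} (hmax : ∀ j, Q j ≤ Q i) (hfirst : ∀ j, Q j = Q i → i ≤ j) :
    2 * ε * lam ≤ rPlusEps lam ε Q i := by
  have hn' : (1 : ℝ) < n := by
    have := i.pos
    exact_mod_cast (show 1 < n by omega)
  have hwins : ((n : ℝ) - 1) * ε ≤ ∑ j ∈ univ.erase i, pEps ε (Q i) (Q j) i j := by
    have := card_nsmul_le_sum (univ.erase i) (fun j => pEps ε (Q i) (Q j) i j) ε fun j hj =>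
      le_pEps hε1 (hmax j) fun h => (hfirst j h.symm).lt_of_ne (ne_of_mem_erase hj).symm
    rwa [card_erase_of_mem (mem_univ i), card_univ, Fintype.card_fin, nsmul_eq_mul,
      Nat.cast_pred i.pos] at this
  calc 2 * ε * lam = 2 * lam / ((n : ℝ) - 1) * (((n : ℝ) - 1) * ε) := by
        field_simp [(sub_pos.2 hn').ne']
    _ ≤ rPlusEps lam ε Q i :=
        mul_le_mul_of_nonneg_left hwins (div_nonneg (by positivity) (by linarith))

end Rates

section Drift

variable {n : ℕ}

noncomputable def arrivalDriftVmax (lam ε : ℝ) (Q : Fin n → ℕ) : ℝ :=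
  ∑ i, rPlusEps lam ε Q i * (Vmax (update Q i (Q i + 1)) - Vmax Q)

noncomputable def departureDriftVmax (Q : Fin n → ℕ) : ℝ :=
  ∑ i, (if 0 < Q i then (1 : ℝ) else 0) * (Vmax (update Q i (Q i - 1)) - Vmax Q)

lemma driftVmax_eq_add (lam ε : ℝ) (Q : Fin n → ℕ) :
    driftVmax lam ε Q = arrivalDriftVmax lam ε Q + departureDriftVmax Q :=
  sum_add_distrib

lemma Vmax_update_succ_sub (Q : Fin n → ℕ) (i : Fin n) :
    Vmax (update Q i (Q i + 1)) - Vmax Q = if Q i = univ.sup Q then 1 else 0 := by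
  split_ifs with h
  · simp [Vmax, univ_sup_update_succ_of_eq Q i h]
  · simp [Vmax, univ_sup_update_succ_of_ne Q i h]

lemma Vmax_update_pred_sub_nonpos (Q : Fin n → ℕ) (i : Fin n) :
    Vmax (update Q i (Q i - 1)) - Vmax Q ≤ 0 := by
  have := univ_sup_update_pred_le Q i
  simp only [Vmax, sub_nonpos]
  exact_mod_cast this

lemma neg_one_le_Vmax_update_pred_sub (Q : Fin n → ℕ) (i : Fin n) :
    -1 ≤ Vmax (update Q i (Q i - 1)) - Vmax Q := by
  have hnat := univ_sup_sub_one_le_univ_sup_update_pred Q i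
  have htrunc : ((univ.sup Q : ℕ) : ℝ) - 1 ≤ ((univ.sup Q - 1 : ℕ) : ℝ) := by
    rcases Nat.eq_zero_or_pos (univ.sup Q) with h | h
    · simp [h]
    · simp [Nat.cast_sub h]
  simp only [Vmax]
  linarith [(Nat.cast_le (α := ℝ)).2 hnat]

lemma departureDriftVmax_nonpos (Q : Fin n → ℕ) : departureDriftVmax Q ≤ 0 :=
  sum_nonpos fun i _ => mul_nonpos_of_nonneg_of_nonpos (by positivity)
    (Vmax_update_pred_sub_nonpos Q i)

lemma neg_one_le_departureDriftVmax (Q : Fin n → ℕ) : -1 ≤ departureDriftVmax Q := by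
  rcases isEmpty_or_nonempty (Fin n) with hn | hn
  · simp [departureDriftVmax]
  obtain ⟨k, -, hk⟩ := exists_mem_eq_sup univ univ_nonempty Q
  have hunchanged : ∀ i, i ≠ k → Vmax (update Q i (Q i - 1)) = Vmax Q := fun i hik => by
    simp [Vmax, univ_sup_update_pred_of_ne Q i hk.symm hik.symm]
  rw [departureDriftVmax, sum_eq_single k (fun i _ hik => by simp [hunchanged i hik]) (by simp)]
  split_ifs
  · simpa using neg_one_le_Vmax_update_pred_sub Q k
  · simp

variable {lam ε : ℝ}

lemma arrivalDriftVmax_le (hn : n ≠ 1) (hlam : 0 ≤ lam) (hε0 : 0 ≤ ε) (hε1 : ε ≤ 1)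
    (Q : Fin n → ℕ) : arrivalDriftVmax lam ε Q ≤ n * lam := by
  rw [← sum_rPlusEps (ε := ε) hn Q]
  refine sum_le_sum fun i _ => ?_
  have := rPlusEps_nonneg hlam hε0 hε1 Q i
  rw [Vmax_update_succ_sub]
  split_ifs <;> simp [this]

lemma two_mul_mul_le_arrivalDriftVmax (hn : 2 ≤ n) (hlam : 0 ≤ lam) (hε0 : 0 ≤ ε) (hε1 : ε ≤ 1)
    (Q : Fin n → ℕ) : 2 * ε * lam ≤ arrivalDriftVmax lam ε Q := by
  have : Nonempty (Fin n) := ⟨⟨0, by omega⟩⟩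
  obtain ⟨i, hmax, hfirst⟩ := exists_least_argmax Q
  have hi : Q i = univ.sup Q := le_antisymm (le_sup (mem_univ i)) (Finset.sup_le fun j _ => hmax j)
  calc 2 * ε * lam ≤ rPlusEps lam ε Q i := two_mul_mul_le_rPlusEps (by omega) hlam hε1 hmax hfirst
    _ = rPlusEps lam ε Q i * (Vmax (update Q i (Q i + 1)) - Vmax Q) := by
        rw [Vmax_update_succ_sub, if_pos hi, mul_one]
    _ ≤ arrivalDriftVmax lam ε Q := by
        refine single_le_sum
          (f := fun j => rPlusEps lam ε Q j * (Vmax (update Q j (Q j + 1)) - Vmax Q))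
          (fun j _ => ?_) (mem_univ i)
        rw [Vmax_update_succ_sub]
        exact mul_nonneg (rPlusEps_nonneg hlam hε0 hε1 Q j) (by positivity)

end Drift

theorem po2eps_instability_drift (ε lam : ℝ) (hε1 : 1/2 < ε) (hε2 : ε ≤ 1)
    (hlam : 1 / (2 * ε) ≤ lam) (n : ℕ) (hn : 2 ≤ n) (Q : Fin n → ℕ) :
    (2 * ε * lam - 1 ≤ driftVmax lam ε Q ∧ 0 ≤ 2 * ε * lam - 1) ∧
    driftVmax lam ε Q ≤ (n : ℝ) * lam := by
  have hε0 : 0 < ε := by linarith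
  have hlam0 : 0 ≤ lam := le_trans (by positivity) hlam
  have hone : 1 ≤ 2 * ε * lam := by
    have := (div_le_iff₀ (by positivity)).1 hlam
    linarith
  have hA_lb := two_mul_mul_le_arrivalDriftVmax hn hlam0 hε0.le hε2 Q
  have hA_ub := arrivalDriftVmax_le (by omega) hlam0 hε0.le hε2 Q
  have hD_lb := neg_one_le_departureDriftVmax Q
  have hD_ub := departureDriftVmax_nonpos Q
  rw [driftVmax_eq_add]
  exact ⟨⟨by linarith, by linarith⟩, by linarith⟩
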